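/- Let G be a group with identity e and let (s₁,…,s_M) be a finite sequence of elements of G∖{e} generating G, and assume the sequence is symmetric in the sense that there exists an involution σ of {1,…,M} with s_{σ(i)} = s_i^{-1} for all i. Then for every function f:G→ℝ and every x∈G, Γ₂f(x) ≥ (1/M)·(Δf(x))² + (1/2)·∑_{i=1}^{M}∑_{j=1}^{M} ∂_j f(x)·(∂_i∂_j f(x) − ∂_j∂_i f(x)). -/

import Mathlib

noncomputable section CayleyOps

variable {G : Type*} [Group G] {M : ℕ}

/-- `∂_i f (x) = f (x * sᵢ) - f x`. -/
def dOp (s : Fin M → G) (i : Fin M) (f : G → ℝ) (x : G) : ℝ := f (x * s i) - f x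

/-- `Δ f (x) = ∑_{i=1}^{M} ∂_i f (x)`. -/
def lapC (s : Fin M → G) (f : G → ℝ) (x : G) : ℝ := ∑ i, dOp s i f x

/-- `Γ f (x) = (1/2) ∑_{i=1}^{M} (∂_i f (x))²`. -/
def gammaC (s : Fin M → G) (f : G → ℝ) (x : G) : ℝ := (1 / 2) * ∑ i, (dOp s i f x) ^ 2

/-- `Γ(f,g)(x) = (1/2) ∑_{i=1}^{M} ∂_i f (x) ∂_i g (x)`. -/
def gammaBilC (s : Fin M → G) (f g : G → ℝ) (x : G) : ℝ :=
  (1 / 2) * ∑ i, dOp s i f x * dOp s i g x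

/-- `Γ₂ f = (1/2) Δ (Γ f) - Γ(f, Δ f)`. -/
def gamma2C (s : Fin M → G) (f : G → ℝ) (x : G) : ℝ :=
  (1 / 2) * lapC s (gammaC s f) x - gammaBilC s f (lapC s f) x

end CayleyOps

/-- For a group `G` generated by a symmetric finite sequence
`s₁, …, s_M` of elements of `G ∖ {e}` (symmetric: there is an involution `σ` of the
indices with `s_{σ i} = (s i)⁻¹`),
`Γ₂ f(x) ≥ (1/M)(Δf(x))² + (1/2) ∑ᵢ∑ⱼ ∂ⱼf(x) (∂ᵢ∂ⱼf(x) - ∂ⱼ∂ᵢf(x))`. -/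
theorem bochner_cayley_lower_bound {G : Type*} [Group G] {M : ℕ} (s : Fin M → G)
    (hs : ∀ i, s i ≠ 1) (hgen : Subgroup.closure (Set.range s) = ⊤)
    (σ : Fin M → Fin M) (hinv : ∀ i, σ (σ i) = i) (hσ : ∀ i, s (σ i) = (s i)⁻¹)
    (f : G → ℝ) (x : G) :
    (1 / (M : ℝ)) * (lapC s f x) ^ 2 +
      (1 / 2) * ∑ i, ∑ j, dOp s j f x * (dOp s i (dOp s j f) x - dOp s j (dOp s i f) x)
      ≤ gamma2C s f x := by
  classical
  have hBexp : ∀ i j : Fin M, dOp s j f (x * s i) = dOp s j f x + dOp s i (dOp s j f) x := by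
    intro i j; simp only [dOp]; ring
  have e1 : ∀ i, dOp s i (gammaC s f) x
      = ∑ j, (dOp s j f x * dOp s i (dOp s j f) x + (1/2) * dOp s i (dOp s j f) x ^ 2) := by
    intro i
    show gammaC s f (x * s i) - gammaC s f x = _
    simp only [gammaC]
    rw [← mul_sub, ← Finset.sum_sub_distrib, Finset.mul_sum]
    exact Finset.sum_congr rfl fun j _ => by rw [hBexp i j]; ring
  have e2 : ∀ i, dOp s i (lapC s f) x = ∑ j, dOp s i (dOp s j f) x := by
    intro i
    show lapC s f (x * s i) - lapC s f x = _
    simp only [lapC]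
    rw [← Finset.sum_sub_distrib]
    exact Finset.sum_congr rfl fun j _ => rfl
  have e3 : gammaBilC s f (lapC s f) x
      = (1/2) * ∑ i, dOp s i f x * ∑ j, dOp s i (dOp s j f) x := by
    simp only [gammaBilC, e2]
  have e4 : lapC s (gammaC s f) x
      = ∑ i, ∑ j, (dOp s j f x * dOp s i (dOp s j f) x + (1/2) * dOp s i (dOp s j f) x ^ 2) := by
    show (∑ i, dOp s i (gammaC s f) x) = _
    simp only [e1]
  have key : gamma2C s f x
      = ∑ i, ∑ j, ((1/4) * dOp s i (dOp s j f) x ^ 2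
          + (1/2) * (dOp s j f x - dOp s i f x) * dOp s i (dOp s j f) x) := by
    rw [gamma2C, e3, e4, Finset.mul_sum, Finset.mul_sum, ← Finset.sum_sub_distrib]
    refine Finset.sum_congr rfl fun i _ => ?_
    rw [Finset.mul_sum, Finset.mul_sum, Finset.mul_sum, ← Finset.sum_sub_distrib]
    exact Finset.sum_congr rfl fun j _ => by ring
  have h2 : ∑ i, ∑ j, dOp s j f x * (dOp s i (dOp s j f) x - dOp s j (dOp s i f) x)
      = ∑ i, ∑ j, (dOp s j f x - dOp s i f x) * dOp s i (dOp s j f) x := by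
    simp only [mul_sub, sub_mul, Finset.sum_sub_distrib]
    congr 1
    exact Finset.sum_comm
  -- Cauchy–Schwarz part
  have hperm : ∑ j, dOp s (σ j) f x = ∑ j, dOp s j f x :=
    Function.Bijective.sum_comp (Function.Involutive.bijective hinv) (fun j => dOp s j f x)
  have hDterm : ∀ j, dOp s (σ j) (dOp s j f) x = -(dOp s j f x + dOp s (σ j) f x) := by
    intro j
    simp only [dOp, hσ j, inv_mul_cancel_right]
    ring
  have hD : ∑ j, dOp s (σ j) (dOp s j f) x = -2 * ∑ j, dOp s j f x := by
    rw [Finset.sum_congr rfl fun j _ => hDterm j, Finset.sum_neg_distrib,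
      Finset.sum_add_distrib, hperm]
    ring
  have hcs : (∑ j, dOp s (σ j) (dOp s j f) x) ^ 2
      ≤ (M : ℝ) * ∑ j, (dOp s (σ j) (dOp s j f) x) ^ 2 := by
    have := sq_sum_le_card_mul_sum_sq (s := (Finset.univ : Finset (Fin M)))
      (f := fun j => dOp s (σ j) (dOp s j f) x)
    simpa using this
  have hsub : ∑ j, (dOp s (σ j) (dOp s j f) x) ^ 2 ≤ ∑ i, ∑ j, dOp s i (dOp s j f) x ^ 2 := by
    rw [Finset.sum_comm]
    refine Finset.sum_le_sum fun j _ => ?_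
    exact Finset.single_le_sum (f := fun i => dOp s i (dOp s j f) x ^ 2)
      (fun i _ => sq_nonneg _) (Finset.mem_univ (σ j))
  have hmain : (1 / (M : ℝ)) * (∑ j, dOp s j f x) ^ 2
      ≤ ∑ i, ∑ j, (1/4) * dOp s i (dOp s j f) x ^ 2 := by
    rcases Nat.eq_zero_or_pos M with hM | hM
    · subst hM; simp
    · have hMpos : (0:ℝ) < M := by exact_mod_cast hM
      have h4 : 4 * (∑ j, dOp s j f x) ^ 2 = (∑ j, dOp s (σ j) (dOp s j f) x) ^ 2 := by
        rw [hD]; ring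
      have h5 : ∑ i, ∑ j, (1/4) * dOp s i (dOp s j f) x ^ 2
          = (1/4) * ∑ i, ∑ j, dOp s i (dOp s j f) x ^ 2 := by
        simp [Finset.mul_sum]
      have h6 : (∑ j, dOp s (σ j) (dOp s j f) x) ^ 2
          ≤ (M : ℝ) * ∑ i, ∑ j, dOp s i (dOp s j f) x ^ 2 :=
        hcs.trans (by nlinarith)
      rw [h5, div_mul_eq_mul_div, one_mul, div_le_iff₀ hMpos]
      nlinarith
  have hlap : lapC s f x = ∑ j, dOp s j f x := rfl
  calc (1 / (M : ℝ)) * (lapC s f x) ^ 2 +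
        (1 / 2) * ∑ i, ∑ j, dOp s j f x * (dOp s i (dOp s j f) x - dOp s j (dOp s i f) x)
      = (1 / (M : ℝ)) * (∑ j, dOp s j f x) ^ 2
        + ∑ i, ∑ j, (1/2) * (dOp s j f x - dOp s i f x) * dOp s i (dOp s j f) x := by
        rw [hlap, h2]
        congr 1
        rw [Finset.mul_sum]
        refine Finset.sum_congr rfl fun i _ => ?_
        rw [Finset.mul_sum]
        exact Finset.sum_congr rfl fun j _ => by ring
    _ ≤ (∑ i, ∑ j, (1/4) * dOp s i (dOp s j f) x ^ 2)
        + ∑ i, ∑ j, (1/2) * (dOp s j f x - dOp s i f x) * dOp s i (dOp s j f) x :=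
        add_le_add_left hmain _
    _ = gamma2C s f x := by
        rw [key, ← Finset.sum_add_distrib]
        exact Finset.sum_congr rfl fun i _ => by rw [← Finset.sum_add_distrib]
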